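/- arXiv:2111.02729 — 3 statements merged into one kernel-verified Lean document; each statement's English description precedes it below -/
import Mathlib

section
/- For every integer n ≥ 3, there is no group isomorphism between the unitary group U(n,ℂ) and the general linear group GL(n,ℂ); that is, U(n,ℂ) and GL(n,ℂ) are not isomorphic as abstract groups. -/
/-!
In `GL(n, ℂ)` the transvection `1 + E₀₁` has infinite order and is conjugate to its square
`1 + 2 E₀₁` (by `diag(2, 1, …, 1)`). In `U(n, ℂ)` no element of infinite order is conjugate to
its square: conjugation preserves the spectrum, so the finite spectrum of such a `u` is closed
under squaring and therefore consists of roots of unity of a common order `N`; then `u ^ N` is a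
unitary matrix whose eigenvalues all equal `1`, so its trace is `n`, which forces `u ^ N = 1`.
-/

open Matrix

theorem Set.Finite.exists_pos_forall_pow_eq_one_of_sq_mem {M : Type*} [GroupWithZero M]
    {S : Set M} (hS : S.Finite) (h0 : (0 : M) ∉ S) (hsq : ∀ x ∈ S, x ^ 2 ∈ S) :
    ∃ N, 0 < N ∧ ∀ x ∈ S, x ^ N = 1 := by
  have : Finite S := hS.to_subtype
  have hpow (k : ℕ) : ∀ x ∈ S, x ^ 2 ^ k ∈ S := by
    induction k with
    | zero => simp
    | succ k ih => intro x hx; rw [pow_succ, pow_mul]; exact hsq _ (ih x hx)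
  -- pigeonhole among the self-maps `x ↦ x ^ 2 ^ k` of the finite set `S`
  obtain ⟨a, b, hab, heq⟩ := Finite.exists_ne_map_eq_of_infinite
    fun k (x : S) => (⟨x ^ 2 ^ k, hpow k x x.2⟩ : S)
  wlog hlt : a < b generalizing a b
  · exact this b a hab.symm heq.symm (by omega)
  refine ⟨2 ^ b - 2 ^ a, Nat.sub_pos_of_lt (Nat.pow_lt_pow_right one_lt_two hlt), fun x hx => ?_⟩
  have hx0 : x ≠ 0 := ne_of_mem_of_not_mem hx h0
  have hxab : x ^ 2 ^ a = x ^ 2 ^ b := congrArg Subtype.val (congrFun heq ⟨x, hx⟩)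
  rw [pow_sub₀ x hx0 (Nat.pow_le_pow_right two_pos hlt.le), ← hxab,
    mul_inv_cancel₀ (pow_ne_zero _ hx0)]

namespace Matrix

variable {ι : Type*} [Fintype ι] [DecidableEq ι]

theorem diagonal_mul_transvection {R : Type*} [CommRing R] {i j : ι} (d : ι → R) {c c' : R}
    (h : d i * c = c' * d j) :
    diagonal d * transvection i j c = transvection i j c' * diagonal d := by
  ext a b
  simp only [transvection, add_apply, diagonal_mul, mul_diagonal, single_apply, one_apply]
  split_ifs <;> grind

theorem trace_eq_card_of_spectrum_subset_one {K : Type*} [Field K] [IsAlgClosed K]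
    {A : Matrix ι ι K} (h : spectrum K A ⊆ {1}) : A.trace = Fintype.card ι := by
  have hroots : A.charpoly.roots = Multiset.replicate (Fintype.card ι) 1 := by
    rw [← A.charpoly_natDegree_eq_dim, (IsAlgClosed.splits _).natDegree_eq_card_roots]
    exact Multiset.eq_replicate_card.mpr fun μ hμ =>
      h (mem_spectrum_of_isRoot_charpoly (Polynomial.isRoot_of_mem_roots hμ))
  rw [trace_eq_sum_roots_charpoly, hroots, Multiset.sum_replicate, nsmul_one]

open scoped ComplexOrder in
theorem eq_one_of_mem_unitaryGroup_of_trace_eq_card {𝕜 : Type*} [RCLike 𝕜] {U : Matrix ι ι 𝕜}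
    (hU : U ∈ unitaryGroup ι 𝕜) (h : U.trace = Fintype.card ι) : U = 1 := by
  rw [← sub_eq_zero, ← trace_conjTranspose_mul_self_eq_zero_iff]
  have hUU : Uᴴ * U = 1 := mem_unitaryGroup_iff'.mp hU
  have hexpand : (U - 1)ᴴ * (U - 1) = 1 + 1 - Uᴴ - U := by
    rw [conjTranspose_sub, conjTranspose_one, sub_mul, mul_sub, mul_sub, hUU]; noncomm_ring
  rw [hexpand, trace_sub, trace_sub, trace_add, trace_conjTranspose, h, trace_one]
  simp

theorem unitaryGroup.isOfFinOrder_of_conj_eq_sq {u g : unitaryGroup ι ℂ}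
    (h : g * u * g⁻¹ = u ^ 2) : IsOfFinOrder u := by
  set U : Matrix ι ι ℂ := (u : Matrix ι ι ℂ)
  have hspec : spectrum ℂ (U ^ 2) = spectrum ℂ U := by
    have hconj : (g : Matrix ι ι ℂ) * U * star (g : Matrix ι ι ℂ) = U ^ 2 := by
      simpa using congrArg Subtype.val h
    rw [← hconj, Unitary.spectrum_star_right_conjugate]
  obtain ⟨N, hN, hpow⟩ := (finite_spectrum U).exists_pos_forall_pow_eq_one_of_sq_mem
    (spectrum.zero_notMem ℂ (Unitary.toUnits u).isUnit)
    fun x hx => hspec ▸ spectrum.pow_mem_pow U 2 hx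
  refine isOfFinOrder_iff_pow_eq_one.mpr ⟨N, hN, Subtype.ext ?_⟩
  refine eq_one_of_mem_unitaryGroup_of_trace_eq_card (u ^ N).2
    (trace_eq_card_of_spectrum_subset_one ?_)
  rw [SubmonoidClass.coe_pow, spectrum.map_pow_of_pos U hN]
  rintro _ ⟨x, hx, rfl⟩
  exact hpow x hx

theorem GeneralLinearGroup.exists_conj_eq_sq_not_isOfFinOrder {K : Type*} [Field K] [CharZero K]
    {i j : ι} (hij : i ≠ j) : ∃ J g : GL ι K, g * J * g⁻¹ = J ^ 2 ∧ ¬IsOfFinOrder J := by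
  have htt (c : K) : transvection i j c * transvection i j (-c) = 1 := by
    rw [transvection_mul_transvection_same _ _ hij, add_neg_cancel, transvection_zero]
  let J : GL ι K := ⟨transvection i j 1, transvection i j (-1), htt 1, by simpa using htt (-1)⟩
  have hJpow (k : ℕ) : ((J ^ k : GL ι K) : Matrix ι ι K) = transvection i j (k : K) := by
    induction k with
    | zero => simp
    | succ k ih =>
      rw [pow_succ, Units.val_mul, ih, Nat.cast_succ]
      exact transvection_mul_transvection_same _ _ hij _ _
  let g : GL ι K := GeneralLinearGroup.mkOfDetNeZero (diagonal (Pi.mulSingle i 2))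
    (by simp [det_diagonal, Finset.prod_pi_mulSingle'])
  refine ⟨J, g, ?_, fun hfin => ?_⟩
  · rw [mul_inv_eq_iff_eq_mul, Units.ext_iff, Units.val_mul, Units.val_mul, hJpow]
    exact diagonal_mul_transvection _ (by simp [Pi.mulSingle_eq_of_ne' hij])
  · obtain ⟨k, hk, hJk⟩ := isOfFinOrder_iff_pow_eq_one.mp hfin
    have hk0 : k = 0 := by
      simpa [hJk, transvection, one_apply_ne hij] using (congrFun (congrFun (hJpow k) i) j).symm
    exact hk.ne' hk0

end Matrix

/-- For every integer `n ≥ 3`, there is no group isomorphism between `U(n, ℂ)` and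
`GL(n, ℂ)`: they are not isomorphic as abstract groups. -/
theorem stmt_7 (n : ℕ) (hn : 3 ≤ n) :
    IsEmpty (Matrix.unitaryGroup (Fin n) ℂ ≃* GL (Fin n) ℂ) := by
  refine ⟨fun e => ?_⟩
  obtain ⟨J, g, hconj, hJ⟩ := GeneralLinearGroup.exists_conj_eq_sq_not_isOfFinOrder (K := ℂ)
    (i := (⟨0, by omega⟩ : Fin n)) (j := ⟨1, by omega⟩) (by simp [Fin.ext_iff])
  have hconj' : e.symm g * e.symm J * (e.symm g)⁻¹ = e.symm J ^ 2 := by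
    simp only [← map_inv, ← map_mul, ← map_pow, hconj]
  have hfin := unitaryGroup.isOfFinOrder_of_conj_eq_sq hconj'
  rw [← orderOf_pos_iff, e.symm.orderOf_eq] at hfin
  exact hJ (orderOf_pos_iff.mp hfin)
end

section
/- For every v in the special unitary group SU(3,ℂ), there exists w ∈ SU(3,ℂ) such that w commutes with v, w is not a scalar matrix, and w² = I. Consequently, for every v ∈ SU(3,ℂ), the quotient of the centralizer of v in SU(3,ℂ) by the center of SU(3,ℂ) is not torsion-free. -/
/-!
Take a unit eigenvector `u` of `v`. Since `v` is unitary, `uᴴ` is a left eigenvector for the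
same eigenvalue, so `v` commutes with the rank-one projection `u uᴴ` and hence with
`w = 2 u uᴴ - 1`, the reflection fixing `u` and negating `uᗮ`. This `w` is a Hermitian
involution, its eigenvalues `1, -1, -1` give `det w = 1`, and it is not scalar because it
fixes `u` but is not the identity.
-/

open Matrix

theorem det_one_add_vecMulVec {n α : Type*} [Fintype n] [DecidableEq n] [CommRing α]
    (u v : n → α) : det (1 + vecMulVec u v) = 1 + v ⬝ᵥ u := by
  rw [vecMulVec_eq Unit, det_one_add_replicateCol_mul_replicateRow]

theorem commute_vecMulVec_of_eigenvector {n α : Type*} [Fintype n] [CommSemiring α]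
    {A : Matrix n n α} {u w : n → α} {μ : α} (hu : A *ᵥ u = μ • u) (hw : w ᵥ* A = μ • w) :
    Commute A (vecMulVec u w) := by
  rw [Commute, SemiconjBy, mul_vecMulVec, vecMulVec_mul, hu, hw, smul_vecMulVec, vecMulVec_smul]

theorem star_vecMul_eq_smul_of_mem_unitaryGroup {n α : Type*} [Fintype n] [DecidableEq n]
    [CommRing α] [StarRing α] {U : Matrix n n α} (hU : U ∈ unitaryGroup n α) {u : n → α}
    {μ : α} (hu : star u ⬝ᵥ u = 1) (hUu : U *ᵥ u = μ • u) : star u ᵥ* U = μ • star u := by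
  have hUU : star U * U = 1 := mem_unitaryGroup_iff'.mp hU
  have hμ : star μ * μ = 1 := by
    have h := congrArg (fun x => star x ⬝ᵥ x) hUu
    simp only [star_mulVec, dotProduct_mulVec, vecMul_vecMul, ← star_eq_conjTranspose, hUU,
      vecMul_one, hu, star_smul, smul_dotProduct, dotProduct_smul, smul_eq_mul, mul_one] at h
    rw [mul_comm, ← h]
  have hUstar : star U *ᵥ u = star μ • u :=
    calc star U *ᵥ u = star μ • star U *ᵥ (μ • u) := by
          rw [mulVec_smul, smul_smul, hμ, one_smul]
      _ = star μ • u := by rw [← hUu, mulVec_mulVec, hUU, one_mulVec]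
  rw [← star_star U, star_eq_conjTranspose (star U), ← star_mulVec, hUstar, star_smul, star_star]

open scoped ComplexOrder in
theorem exists_unit_eigenvector {n : Type*} [Fintype n] [DecidableEq n] [Nonempty n]
    (A : Matrix n n ℂ) : ∃ (u : n → ℂ) (μ : ℂ), star u ⬝ᵥ u = 1 ∧ A *ᵥ u = μ • u := by
  obtain ⟨μ, hμ⟩ := Module.End.exists_eigenvalue (mulVecLin A)
  obtain ⟨x, hx⟩ := hμ.exists_hasEigenvector
  obtain ⟨r, hr, hrx⟩ :=
    RCLike.pos_iff_exists_ofReal.mp (dotProduct_star_self_pos_iff.mpr hx.2)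
  refine ⟨(√r)⁻¹ • x, μ, ?_, ?_⟩
  · rw [star_smul, star_trivial, smul_dotProduct, dotProduct_smul, ← hrx, smul_smul,
      ← mul_inv, Real.mul_self_sqrt hr.le, Complex.real_smul, Complex.ofReal_inv]
    exact inv_mul_cancel₀ (by exact_mod_cast hr.ne')
  · rw [mulVec_smul, ← mulVecLin_apply, hx.apply_eq_smul, smul_comm]

section LineReflection

variable {n α : Type*} [DecidableEq n] [CommRing α] [StarRing α] {u : n → α}

def lineReflection (u : n → α) : Matrix n n α := (2 : α) • vecMulVec u (star u) - 1

theorem conjTranspose_lineReflection (u : n → α) : (lineReflection u)ᴴ = lineReflection u := by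
  rw [lineReflection, conjTranspose_sub, conjTranspose_smul, conjTranspose_vecMulVec, star_star,
    conjTranspose_one, star_ofNat]

variable [Fintype n]

theorem lineReflection_mulVec_self (hu : star u ⬝ᵥ u = 1) : lineReflection u *ᵥ u = u := by
  rw [lineReflection, sub_mulVec, smul_mulVec, vecMulVec_mulVec, hu, one_mulVec,
    MulOpposite.op_one, one_smul, two_smul, add_sub_cancel_right]

theorem lineReflection_mul_self (hu : star u ⬝ᵥ u = 1) :
    lineReflection u * lineReflection u = 1 := by
  have hP : vecMulVec u (star u) * vecMulVec u (star u) = vecMulVec u (star u) := by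
    rw [vecMulVec_mul_vecMulVec, hu, one_smul]
  rw [lineReflection, sub_mul, mul_sub, mul_sub, smul_mul_smul_comm, hP, Matrix.mul_one,
    Matrix.one_mul, Matrix.mul_one]
  module

theorem lineReflection_mem_unitaryGroup (hu : star u ⬝ᵥ u = 1) :
    lineReflection u ∈ unitaryGroup n α := by
  rw [mem_unitaryGroup_iff', star_eq_conjTranspose, conjTranspose_lineReflection,
    lineReflection_mul_self hu]

theorem det_lineReflection (hu : star u ⬝ᵥ u = 1) :
    det (lineReflection u) = -(-1) ^ Fintype.card n := by
  have : lineReflection u = -(1 + vecMulVec ((-2 : α) • u) (star u)) := by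
    rw [lineReflection, smul_vecMulVec, neg_smul, ← sub_eq_add_neg, neg_sub]
  rw [this, det_neg, det_one_add_vecMulVec, dotProduct_smul, hu]
  ring

theorem lineReflection_mem_specialUnitaryGroup (hu : star u ⬝ᵥ u = 1)
    (hn : Odd (Fintype.card n)) : lineReflection u ∈ specialUnitaryGroup n α :=
  mem_specialUnitaryGroup_iff.mpr
    ⟨lineReflection_mem_unitaryGroup hu, by rw [det_lineReflection hu, hn.neg_one_pow, neg_neg]⟩

theorem commute_lineReflection_of_eigenvector {A : Matrix n n α} {μ : α}
    (hAu : A *ᵥ u = μ • u) (huA : star u ᵥ* A = μ • star u) : Commute A (lineReflection u) :=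
  ((commute_vecMulVec_of_eigenvector hAu huA).smul_right _).sub_right (Commute.one_right A)

end LineReflection

theorem lineReflection_ne_smul_one {n α : Type*} [Fintype n] [DecidableEq n] [Field α]
    [CharZero α] [StarRing α] {u : n → α} (hu : star u ⬝ᵥ u = 1) (hn : 1 < Fintype.card n)
    (c : α) : lineReflection u ≠ c • 1 := by
  intro hc
  have hu0 : u ≠ 0 := by rintro rfl; simp at hu
  have hc1 : c = 1 := by
    have h := lineReflection_mulVec_self hu
    rw [hc, smul_mulVec, one_mulVec] at h
    exact (smul_left_injective α hu0).eq_iff.mp (h.trans (one_smul α u).symm)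
  have htr := congrArg trace hc
  rw [hc1, one_smul, lineReflection, trace_sub, trace_smul, trace_vecMulVec, dotProduct_comm,
    hu, trace_one] at htr
  have hcard : (Fintype.card n : α) = 1 := by linear_combination -htr / 2
  exact hn.ne' (by exact_mod_cast hcard)

/-- For every `v ∈ SU(3, ℂ)` there exists `w ∈ SU(3, ℂ)` commuting with `v` such that `w`
is not a scalar matrix and `w ^ 2 = 1`. Consequently the centralizer of `v` in `SU(3, ℂ)`
modulo the center of `SU(3, ℂ)` is not torsion-free. -/
theorem stmt_12 (v : Matrix.specialUnitaryGroup (Fin 3) ℂ) :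
    ∃ w : Matrix.specialUnitaryGroup (Fin 3) ℂ,
      w * v = v * w ∧
      (¬ ∃ lam : ℂ, (w : Matrix (Fin 3) (Fin 3) ℂ) = lam • 1) ∧
      w ^ 2 = 1 := by
  obtain ⟨u, μ, hu, hvu⟩ := exists_unit_eigenvector (v : Matrix (Fin 3) (Fin 3) ℂ)
  have huv := star_vecMul_eq_smul_of_mem_unitaryGroup (specialUnitaryGroup_le_unitaryGroup v.2)
    hu hvu
  refine ⟨⟨lineReflection u, lineReflection_mem_specialUnitaryGroup hu (by decide)⟩, ?_, ?_, ?_⟩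
  · exact Subtype.ext (commute_lineReflection_of_eigenvector hvu huv).symm.eq
  · rintro ⟨c, hc⟩
    exact lineReflection_ne_smul_one hu (by decide) c hc
  · exact Subtype.ext ((sq _).trans (lineReflection_mul_self hu))
end

section
/- There is no group isomorphism between the special unitary group SU(3,ℂ) and the special linear group SL(3,ℂ); that is, SU(3,ℂ) and SL(3,ℂ) are not isomorphic even as abstract groups (ignoring all topological and geometric structure). -/
/-!
In `SL(3, ℂ)` the transvection `t = 1 + E₀₁` has infinite order, yet the diagonal matrix
`d = diag(2, 1/2, 1)` conjugates it to `t⁴`. In `SU(3)` no such element exists: if `k g k⁻¹ = gᵐ`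
with `m > 1`, then the finite spectrum of `g` is closed under `μ ↦ μᵐ`, so every eigenvalue is a root
of unity and `gᴺ` has spectrum `{1}` for some `N > 0`; as `gᴺ` is unitary, hence normal, `gᴺ = 1`.
-/

open Matrix

theorem Set.Finite.isOfFinOrder_of_pow_mem {G₀ : Type*} [GroupWithZero G₀] {S : Set G₀}
    (hS : S.Finite) {m : ℕ} (hm : 1 < m) (hpow : ∀ x ∈ S, x ^ m ∈ S) {x : G₀} (hx : x ∈ S)
    (hx₀ : x ≠ 0) : IsOfFinOrder x := by
  have hmem : ∀ n : ℕ, x ^ m ^ n ∈ S := by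
    intro n
    induction n with
    | zero => simpa using hx
    | succ n ih => simpa only [pow_succ, pow_mul] using hpow _ ih
  obtain ⟨a, b, hab, heq⟩ := Finite.exists_lt_map_eq_of_forall_mem hmem hS
  have hlt : m ^ a < m ^ b := Nat.pow_lt_pow_right hm hab
  refine isOfFinOrder_iff_pow_eq_one.mpr ⟨m ^ b - m ^ a, Nat.sub_pos_of_lt hlt, ?_⟩
  rw [pow_sub₀ x hx₀ hlt.le, ← heq, mul_inv_cancel₀ (pow_ne_zero _ hx₀)]

theorem Set.Finite.exists_pow_eq_one {M : Type*} [Monoid M] {S : Set M} (hS : S.Finite)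
    (h : ∀ x ∈ S, IsOfFinOrder x) : ∃ N, 0 < N ∧ ∀ x ∈ S, x ^ N = 1 := by
  refine ⟨∏ x ∈ hS.toFinset, orderOf x, Finset.prod_pos fun x hx ↦ ?_, fun x hx ↦ ?_⟩
  · exact (h x (hS.mem_toFinset.mp hx)).orderOf_pos
  · exact orderOf_dvd_iff_pow_eq_one.mp (Finset.dvd_prod_of_mem _ (hS.mem_toFinset.mpr hx))

theorem spectrum.pow_mem_of_mul_eq_pow_mul {𝕜 A : Type*} [Field 𝕜] [Ring A] [Algebra 𝕜 A]
    {a k : A} (hk : IsUnit k) {m : ℕ} (h : k * a = a ^ m * k) {μ : 𝕜}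
    (hμ : μ ∈ spectrum 𝕜 a) : μ ^ m ∈ spectrum 𝕜 a := by
  obtain ⟨u, rfl⟩ := hk
  have hconj : a ^ m = u * a * ↑u⁻¹ := by rw [h, Units.mul_inv_cancel_right]
  simpa [hconj] using spectrum.pow_mem_pow a m hμ

open scoped Matrix.Norms.L2Operator in
theorem Matrix.isOfFinOrder_of_mul_eq_pow_mul {n : Type*} [Fintype n] [DecidableEq n]
    {g k : Matrix n n ℂ} (hg : g ∈ unitaryGroup n ℂ) (hk : IsUnit k) {m : ℕ} (hm : 1 < m)
    (h : k * g = g ^ m * k) : IsOfFinOrder g := by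
  have hfin := Matrix.finite_spectrum g
  have hg₀ : (0 : ℂ) ∉ spectrum ℂ g := spectrum.zero_notMem ℂ (Unitary.isUnit_coe (U := ⟨g, hg⟩))
  obtain ⟨N, hN, hroots⟩ := hfin.exists_pow_eq_one fun μ hμ ↦
    hfin.isOfFinOrder_of_pow_mem hm (fun _ ↦ spectrum.pow_mem_of_mul_eq_pow_mul hk h) hμ
      (ne_of_mem_of_not_mem hμ hg₀)
  have hspec : spectrum ℂ (g ^ N) ⊆ {1} := by
    rw [spectrum.map_pow_of_pos g hN]
    rintro _ ⟨μ, hμ, rfl⟩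
    exact hroots μ hμ
  have : IsStarNormal (g ^ N) := by simpa using Unitary.coe_isStarNormal (⟨g, hg⟩ ^ N)
  exact isOfFinOrder_iff_pow_eq_one.mpr ⟨N, hN, CFC.eq_one_of_spectrum_subset_one (g ^ N) hspec⟩

theorem Matrix.specialUnitaryGroup.isOfFinOrder_of_mul_eq_pow_mul {n : Type*} [Fintype n]
    [DecidableEq n] {g k : specialUnitaryGroup n ℂ} {m : ℕ} (hm : 1 < m) (h : k * g = g ^ m * k) :
    IsOfFinOrder g :=
  Submonoid.isOfFinOrder_coe.mp <| Matrix.isOfFinOrder_of_mul_eq_pow_mul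
    (specialUnitaryGroup_le_unitaryGroup g.2) ((Group.isUnit k).map (Submonoid.subtype _)) hm
    (by simpa using congrArg Subtype.val h)

namespace Matrix.SpecialLinearGroup

variable {ι F : Type*} [Fintype ι] [DecidableEq ι] [Field F] {i j : ι}

theorem transvection_pow (hij : i ≠ j) (b : F) (m : ℕ) :
    transvection hij b ^ m = transvection hij (m * b) := by
  induction m with
  | zero => simp
  | succ m ih => rw [pow_succ, ih, ← transvection_add]; push_cast; ring_nf

theorem diag2n_mul_transvection (hij : i ≠ j) {a : F} (ha : a ≠ 0) (b : F) :
    diag2n hij a ha * transvection hij b = transvection hij (a ^ 2 * b) * diag2n hij a ha := by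
  ext k l
  simp only [SpecialLinearGroup.coe_mul, diag2n_coe, transvection_coe, mul_add, add_mul,
    diagonal_mul, mul_diagonal, add_apply, single_apply, one_apply]
  grind

theorem not_isOfFinOrder_transvection [CharZero F] (hij : i ≠ j) {b : F} (hb : b ≠ 0) :
    ¬IsOfFinOrder (transvection hij b) := by
  rw [isOfFinOrder_iff_pow_eq_one]
  rintro ⟨m, hm, hpow⟩
  have hij_entry := congr_arg (fun A : SpecialLinearGroup ι F ↦ A i j) hpow
  simp [transvection_pow, transvection_coe, hij, hb] at hij_entry
  omega

end Matrix.SpecialLinearGroup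

/-- There is no group isomorphism between `SU(3, ℂ)` and `SL(3, ℂ)`: they are not
isomorphic even as abstract groups. -/
theorem stmt_13 :
    IsEmpty (Matrix.specialUnitaryGroup (Fin 3) ℂ ≃* Matrix.SpecialLinearGroup (Fin 3) ℂ) := by
  refine ⟨fun φ ↦ ?_⟩
  have hij : (0 : Fin 3) ≠ 1 := by decide
  have hrel : SpecialLinearGroup.diag2n hij (2 : ℂ) two_ne_zero * .transvection hij 1 =
      .transvection hij 1 ^ 4 * SpecialLinearGroup.diag2n hij (2 : ℂ) two_ne_zero := by
    rw [SpecialLinearGroup.diag2n_mul_transvection, SpecialLinearGroup.transvection_pow]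
    norm_num
  replace hrel := congrArg φ.symm hrel
  rw [map_mul, map_mul, map_pow] at hrel
  have hfin := φ.toMonoidHom.isOfFinOrder
    (specialUnitaryGroup.isOfFinOrder_of_mul_eq_pow_mul (by norm_num) hrel)
  exact SpecialLinearGroup.not_isOfFinOrder_transvection hij one_ne_zero (by simpa using hfin)
end
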